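/- arXiv:1304.2639 — 7 statements merged into one kernel-verified Lean document; each statement's English description precedes it below -/
import Mathlib

section
/- Let F = {f₁, …, f_N} be a finite nonempty set of functions f_i(z) = a_i·z + b_i with a_i, b_i ∈ ℤ and |a_i| > 1 for all i, let y ∈ ℤ, let Q = 1 + max_i |b_i| and R = max(Q, |y|). Then for every F-composition G and every z ∈ ℤ, if G(z) = y then |z| ≤ R. -/
/-- All preimages of `y` under `F`-compositions lie in `[-R, R]`, when every function
`fᵢ(z) = aᵢ·z + bᵢ` in the finite nonempty set `F` satisfies `|aᵢ| > 1`. An `F`-composition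
is encoded as a list of indices `L = [e₁, …, e_K]`, applied by `foldl` (so `f_{e₁}` first). -/
theorem preimages_bounded (N : ℕ) (hN : 0 < N) (a b : Fin N → ℤ)
    (ha : ∀ i, 1 < |a i|) (y : ℤ) (Q R : ℤ)
    (hQ : Q = 1 + ↑(Finset.univ.sup fun i => (b i).natAbs))
    (hR : R = max Q |y|)
    (L : List (Fin N)) (z : ℤ)
    (h : L.foldl (fun w i => a i * w + b i) z = y) :
    |z| ≤ R := by
  induction L generalizing z with
  | nil =>
    simp only [List.foldl_nil] at h
    subst h
    rw [hR]; exact le_max_right _ _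
  | cons i L ih =>
    have hzi : |a i * z + b i| ≤ R := ih (a i * z + b i) h
    by_contra hc
    push_neg at hc
    have hb : |b i| ≤ Q - 1 := by
      have h1 : (b i).natAbs ≤ Finset.univ.sup fun i => (b i).natAbs :=
        Finset.le_sup (f := fun i => (b i).natAbs) (Finset.mem_univ i)
      have h2 : ((b i).natAbs : ℤ) ≤ (Finset.univ.sup fun i => (b i).natAbs : ℕ) :=
        Int.ofNat_le.mpr h1
      rw [Int.abs_eq_natAbs]; omega
    have hQR : Q ≤ R := hR ▸ le_max_left _ _
    have h2z : 2 * |z| ≤ |a i| * |z| := by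
      have := ha i
      nlinarith [abs_nonneg z]
    have htri : |a i * z| ≤ |a i * z + b i| + |b i| := by
      have h4 := abs_add_le (a i * z + b i) (-(b i))
      simpa using h4
    rw [abs_mul] at htri
    omega
end

section
/- Let x, y ∈ ℤ, let S be a finite set of functions f_i(z) = a_i·z + b_i with a_i, b_i ∈ ℤ and a_i ≠ 0, let k ∈ ℤ with k ≠ 0, let g(z) = z + k, and let F = S ∪ {g}. If there exists an S-composition G with G(x) ≡ y (mod k) and sgn(G(x) − y) ≠ sgn(k), then x →_F y. -/
/-! Compose `G` with enough copies of `g(z) = z + k`: the congruence makes `y - G(x)` a multiple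
of `k`, and the sign condition makes that multiple nonnegative. -/

/-- Apply the composition given by the tuple `L = (f₁, …, f_K)` of affine functions
(encoded by coefficient pairs `(a, b)`, i.e. `z ↦ a·z + b`), viewed as `f_K ∘ ⋯ ∘ f₁`. -/
def applyComp (L : List (ℤ × ℤ)) (x : ℤ) : ℤ := L.foldl (fun z p => p.1 * z + p.2) x

lemma applyComp_append (L M : List (ℤ × ℤ)) (x : ℤ) :
    applyComp (L ++ M) x = applyComp M (applyComp L x) :=
  List.foldl_append

lemma applyComp_replicate_translation (k : ℤ) (n : ℕ) (z : ℤ) :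
    applyComp (List.replicate n ((1 : ℤ), k)) z = z + n * k := by
  induction n generalizing z with
  | zero => simp [applyComp]
  | succ n ih =>
    rw [List.replicate_succ, applyComp, List.foldl_cons, ← applyComp, ih]
    push_cast
    ring

lemma Int.exists_nat_add_mul_eq_of_modEq_of_sign_ne {z y k : ℤ} (hmod : z ≡ y [ZMOD k])
    (hsign : (z - y).sign ≠ k.sign) : ∃ n : ℕ, z + n * k = y := by
  obtain ⟨c, hc⟩ := hmod.dvd
  have hc_nonneg : 0 ≤ c := by
    by_contra! hc_neg
    apply hsign
    rw [show z - y = k * -c by linarith, Int.sign_mul, Int.sign_eq_one_of_pos (neg_pos.2 hc_neg), mul_one]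
  exact ⟨c.toNat, by rw [Int.toNat_of_nonneg hc_nonneg]; linarith⟩

theorem case_opposite_sign_general (x y : ℤ) (S : Finset (ℤ × ℤ))
    (k : ℤ)
    (hex : ∃ G : List (ℤ × ℤ), (∀ p ∈ G, p ∈ S) ∧ applyComp G x ≡ y [ZMOD k] ∧
      (applyComp G x - y).sign ≠ k.sign) :
    ∃ G : List (ℤ × ℤ), (∀ p ∈ G, p ∈ insert ((1 : ℤ), k) S) ∧ applyComp G x = y := by
  obtain ⟨G, hG, hmod, hsign⟩ := hex
  obtain ⟨n, hn⟩ := Int.exists_nat_add_mul_eq_of_modEq_of_sign_ne hmod hsign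
  refine ⟨G ++ List.replicate n ((1 : ℤ), k), fun p hp => ?_, ?_⟩
  · rcases List.mem_append.1 hp with hp | hp
    · exact Finset.mem_insert_of_mem (hG p hp)
    · simp [List.eq_of_mem_replicate hp]
  · rw [applyComp_append, applyComp_replicate_translation, hn]

/-- Case (B): if some `S`-composition `G` has `G(x) ≡ y (mod k)` and
`sgn(G(x) − y) ≠ sgn(k)`, then some `F`-composition maps `x` to `y`, where
`F = S ∪ {g}` with `g(z) = z + k` (encoded as the pair `(1, k)`). -/
theorem case_opposite_sign (x y : ℤ) (S : Finset (ℤ × ℤ)) (hS : ∀ p ∈ S, p.1 ≠ 0)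
    (k : ℤ) (hk : k ≠ 0)
    (hex : ∃ G : List (ℤ × ℤ), (∀ p ∈ G, p ∈ S) ∧ applyComp G x ≡ y [ZMOD k] ∧
      (applyComp G x - y).sign ≠ k.sign) :
    ∃ G : List (ℤ × ℤ), (∀ p ∈ G, p ∈ insert ((1 : ℤ), k) S) ∧ applyComp G x = y :=
  case_opposite_sign_general x y S k hex
end

section
/- Let x, y ∈ ℤ, let S be a finite set of functions f_i(z) = a_i·z + b_i with a_i, b_i ∈ ℤ and a_i ≠ 0, let k ∈ ℤ with k ≠ 0, let g(z) = z + k, and let F = S ∪ {g}. Suppose that every S-composition G = (f_{e_1}, …, f_{e_K}) with G(x) ≡ y (mod k) satisfies both sgn(G(x) − y) = sgn(k) and a_{e_j} > 0 for all j. Then ¬(x →_F y). -/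
lemma applyComp_cons (p : ℤ × ℤ) (B : List (ℤ × ℤ)) (z : ℤ) :
    applyComp (p :: B) z = applyComp B (p.1 * z + p.2) := rfl

lemma applyComp_append_s9 (A B : List (ℤ × ℤ)) (z : ℤ) :
    applyComp (A ++ B) z = applyComp B (applyComp A z) := by
  simp [applyComp, List.foldl_append]

lemma applyComp_shift (B : List (ℤ × ℤ)) : ∀ u c : ℤ,
    applyComp B (u + c) = applyComp B u + c * (B.map Prod.fst).prod := by
  induction B with
  | nil => intro u c; simp [applyComp]
  | cons p B ih =>
    intro u c
    rw [applyComp_cons, applyComp_cons]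
    have : p.1 * (u + c) + p.2 = (p.1 * u + p.2) + c * p.1 := by ring
    rw [this, ih]
    simp
    ring

lemma key (x y : ℤ) (S : Finset (ℤ × ℤ)) (k : ℤ) (hk : k ≠ 0)
    (hall : ∀ G : List (ℤ × ℤ), (∀ p ∈ G, p ∈ S) → applyComp G x ≡ y [ZMOD k] →
      (applyComp G x - y).sign = k.sign ∧ ∀ p ∈ G, 0 < p.1) :
    ∀ n (L : List (ℤ × ℤ)), L.length ≤ n → (∀ p ∈ L, p ∈ insert ((1 : ℤ), k) S) →
      applyComp L x ≡ y [ZMOD k] →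
      (applyComp L x - y).sign = k.sign ∧ ∀ p ∈ L, 0 < p.1 := by
  intro n
  induction n with
  | zero =>
    intro L hlen _ hmod
    have : L = [] := List.length_eq_zero_iff.mp (Nat.le_zero.mp hlen)
    subst this
    exact hall [] (by simp) hmod
  | succ n ih =>
    intro L hlen hmem hmod
    by_cases hg : ((1 : ℤ), k) ∈ L
    · obtain ⟨A, B, rfl⟩ := List.append_of_mem hg
      have hu : applyComp (A ++ ((1, k) :: B)) x
          = applyComp (A ++ B) x + k * (B.map Prod.fst).prod := by
        rw [applyComp_append_s9, applyComp_cons, applyComp_append_s9]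
        simp only [one_mul]
        rw [applyComp_shift]
      have hlen' : (A ++ B).length ≤ n := by
        simp at hlen ⊢; omega
      have hmem' : ∀ p ∈ A ++ B, p ∈ insert ((1 : ℤ), k) S := by
        intro p hp
        apply hmem
        simp at hp ⊢
        tauto
      have hmod' : applyComp (A ++ B) x ≡ y [ZMOD k] := by
        have : applyComp (A ++ B) x ≡ applyComp (A ++ ((1, k) :: B)) x [ZMOD k] := by
          rw [hu]
          exact (Int.modEq_iff_dvd.mpr ⟨(B.map Prod.fst).prod, by ring⟩)
        exact this.trans hmod
      obtain ⟨hsign, hpos⟩ := ih (A ++ B) hlen' hmem' hmod'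
      have hPpos : 0 < (B.map Prod.fst).prod := by
        apply List.prod_pos
        intro a ha
        obtain ⟨q, hq, rfl⟩ := List.mem_map.mp ha
        exact hpos q (by simp [hq])
      constructor
      · rw [hu]
        rcases lt_trichotomy k 0 with hkneg | hk0 | hkpos
        · have h1 : (applyComp (A ++ B) x - y) < 0 := by
            rw [Int.sign_eq_neg_one_iff_neg.symm, hsign, Int.sign_eq_neg_one_iff_neg]
            exact hkneg
          have h2 : k * (B.map Prod.fst).prod < 0 := mul_neg_of_neg_of_pos hkneg hPpos
          rw [Int.sign_eq_neg_one_iff_neg.mpr hkneg, Int.sign_eq_neg_one_iff_neg]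
          omega
        · exact absurd hk0 hk
        · have h1 : 0 < (applyComp (A ++ B) x - y) := by
            rw [Int.sign_eq_one_iff_pos.symm, hsign, Int.sign_eq_one_iff_pos]
            exact hkpos
          have h2 : 0 < k * (B.map Prod.fst).prod := mul_pos hkpos hPpos
          rw [Int.sign_eq_one_iff_pos.mpr hkpos, Int.sign_eq_one_iff_pos]
          omega
      · intro p hp
        simp at hp
        rcases hp with hp | hp | hp
        · exact hpos p (by simp [hp])
        · subst hp; norm_num
        · exact hpos p (by simp [hp])
    · refine hall L ?_ hmod
      intro p hp
      have := hmem p hp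
      rcases Finset.mem_insert.mp this with h | h
      · exact absurd (h ▸ hp) hg
      · exact h

/-- Case (D): if every `S`-composition `G` with `G(x) ≡ y (mod k)` satisfies both
`sgn(G(x) − y) = sgn(k)` and that all linear coefficients appearing in `G` are positive,
then no `F`-composition maps `x` to `y`, where `F = S ∪ {g}` with `g(z) = z + k`
(encoded as the pair `(1, k)`). -/
theorem case_same_sign (x y : ℤ) (S : Finset (ℤ × ℤ)) (hS : ∀ p ∈ S, p.1 ≠ 0)
    (k : ℤ) (hk : k ≠ 0)
    (hall : ∀ G : List (ℤ × ℤ), (∀ p ∈ G, p ∈ S) → applyComp G x ≡ y [ZMOD k] →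
      (applyComp G x - y).sign = k.sign ∧ ∀ p ∈ G, 0 < p.1) :
    ¬ ∃ G : List (ℤ × ℤ), (∀ p ∈ G, p ∈ insert ((1 : ℤ), k) S) ∧ applyComp G x = y := by
  rintro ⟨G, hG, hGx⟩
  have := (key x y S k hk hall G.length G le_rfl hG (by rw [hGx])).1
  rw [hGx] at this
  simp at this
  exact hk (Int.sign_eq_zero_iff_zero.mp this.symm)
end

section
/- Let σ be a finite alphabet and φ : σ → (ℤ → ℤ) assign to each letter e an affine function φ(e)(z) = a_e·z + b_e with a_e > 0. For a word s = e_1…e_K over σ let P_s = φ(e_K) ∘ ⋯ ∘ φ(e_1), and for z ∈ ℤ and a regular expression E over σ define I(z, E) to mean: there exists a word s in the language of E with P_s(z) > z. Then for every z ∈ ℤ and every regular expression α over σ: I(z, α*) holds if and only if I(z, α) holds. -/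
/-!
If no word of `α` raises `z`, then every word `s` of `α` satisfies `P_s(z) ≤ z`. Since positive
linear coefficients make every `P_t` monotone, this survives concatenation:
`P_{s₁⋯sₙ}(z) = P_{sₙ}(⋯ P_{s₁}(z)) ≤ z`, so no word of `α*` raises `z` either. The converse holds
because `α ⊆ α*`.
-/

/-- `wordP φ s z` applies `P_s = φ(e_K) ∘ ⋯ ∘ φ(e_1)` to `z`, for the word `s = e_1…e_K`. -/
def wordP {σ : Type*} (φ : σ → ℤ → ℤ) (s : List σ) (z : ℤ) : ℤ :=
  s.foldl (fun w e => φ e w) z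

/-- `I(z, E)`: some word `s` in the language of `E` satisfies `P_s(z) > z`. -/
def Incr {σ : Type*} (φ : σ → ℤ → ℤ) (z : ℤ) (E : RegularExpression σ) : Prop :=
  ∃ s ∈ E.matches', z < wordP φ s z

section Monotone

variable {σ : Type*} {φ : σ → ℤ → ℤ}

theorem wordP_append (s t : List σ) (z : ℤ) :
    wordP φ (s ++ t) z = wordP φ t (wordP φ s z) :=
  List.foldl_append

theorem wordP_monotone (hφ : ∀ e, Monotone (φ e)) (s : List σ) : Monotone (wordP φ s) :=
  List.foldl_monotone hφ s

theorem wordP_flatten_le (hφ : ∀ e, Monotone (φ e)) {z : ℤ} :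
    ∀ {L : List (List σ)}, (∀ s ∈ L, wordP φ s z ≤ z) → wordP φ L.flatten z ≤ z
  | [], _ => le_rfl
  | s :: L, h => by
    rw [List.flatten_cons, wordP_append]
    calc wordP φ L.flatten (wordP φ s z)
        ≤ wordP φ L.flatten z := wordP_monotone hφ _ (h s List.mem_cons_self)
      _ ≤ z := wordP_flatten_le hφ fun t ht => h t (List.mem_cons_of_mem s ht)

theorem incr_star_iff_of_monotone (hφ : ∀ e, Monotone (φ e)) (z : ℤ)
    (α : RegularExpression σ) : Incr φ z α.star ↔ Incr φ z α := by
  refine ⟨fun ⟨s, hs, hz⟩ => ?_, fun ⟨s, hs, hz⟩ => ⟨s, le_kstar (a := α.matches') hs, hz⟩⟩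
  obtain ⟨L, rfl, hL⟩ := Language.mem_kstar.mp hs
  by_contra hα
  simp only [Incr, not_exists, not_and, not_lt] at hα
  exact hz.not_ge (wordP_flatten_le hφ fun t ht => hα t (hL t ht))

end Monotone

theorem monotone_affine {a : ℤ} (ha : 0 ≤ a) (b : ℤ) : Monotone fun z => a * z + b :=
  fun _ _ h => by dsimp only; gcongr

theorem incr_star_general (σ : Type*) (φ : σ → ℤ → ℤ)
    (hφ : ∀ e : σ, ∃ a b : ℤ, 0 < a ∧ ∀ z : ℤ, φ e z = a * z + b)
    (z : ℤ) (α : RegularExpression σ) :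
    Incr φ z α.star ↔ Incr φ z α := by
  refine incr_star_iff_of_monotone (fun e => ?_) z α
  obtain ⟨a, b, ha, hφe⟩ := hφ e
  rw [funext hφe]
  exact monotone_affine ha.le b

/-- For a regular expression `α` over a finite alphabet `σ` whose letters denote affine
functions with positive linear coefficients, `I(z, α*) ↔ I(z, α)`. -/
theorem incr_star (σ : Type*) [Fintype σ] (φ : σ → ℤ → ℤ)
    (hφ : ∀ e : σ, ∃ a b : ℤ, 0 < a ∧ ∀ z : ℤ, φ e z = a * z + b)
    (z : ℤ) (α : RegularExpression σ) :
    Incr φ z α.star ↔ Incr φ z α :=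
  incr_star_general σ φ hφ z α
end

section
/- Let F = {f₁, …, f_N} be a finite nonempty set of functions f_i(z) = a_i·z + b_i with a_i, b_i ∈ ℤ and |a_i| > 1 for all i, let y ∈ ℕ, let Q = 1 + max_i |b_i| and R = max(Q, y). Then for every z ∈ ℕ and every F-composition G that is valid with respect to z, if G(z) = y then 0 ≤ z ≤ R. -/
/-!
A nonnegative value `w > |b|` is pushed strictly upwards by `w ↦ a * w + b` whenever `|a| ≥ 2`
and the image stays nonnegative, since then `a * w + b ≥ |a| * w - |b| > w`. Since `|bᵢ| < Q ≤ R`, along a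
valid composition the orbit of any `z > R` therefore never drops below `z > R ≥ y`, so it cannot
end at `y`.
-/

section Affine

variable {ι α : Type*} [CommRing α] [LinearOrder α] [IsStrictOrderedRing α]

lemma lt_mul_add_of_abs_lt {a b w : α} (ha : 2 ≤ |a|) (hb : |b| < w) (h : 0 ≤ a * w + b) :
    w < a * w + b := by
  have hw : 0 < w := (abs_nonneg b).trans_lt hb
  calc w < 2 * w - |b| := by linarith
    _ ≤ |a| * w - |b| := by gcongr
    _ = |a * w| - |b| := by rw [abs_mul, abs_of_pos hw]
    _ ≤ |a * w + b| := by simpa using abs_sub_abs_le_abs_sub (a * w) (-b)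
    _ = a * w + b := abs_of_nonneg h

lemma le_foldl_of_forall_prefix_nonneg (a b : ι → α) (ha : ∀ i, 2 ≤ |a i|) :
    ∀ (L : List ι) {w : α}, (∀ i, |b i| < w) →
      (∀ t, t <+: L → 0 ≤ t.foldl (fun w i => a i * w + b i) w) →
      w ≤ L.foldl (fun w i => a i * w + b i) w
  | [], _, _, _ => le_rfl
  | i :: L, w, hb, hvalid => by
    have hstep : w < a i * w + b i :=
      lt_mul_add_of_abs_lt (ha i) (hb i) (by simpa using hvalid [i] ⟨L, rfl⟩)
    have hrest := le_foldl_of_forall_prefix_nonneg a b ha L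
      (fun j => (hb j).trans hstep)
      (fun t ht => by simpa using hvalid (i :: t) ((List.prefix_cons_inj i).mpr ht))
    exact hstep.le.trans hrest

end Affine

lemma abs_lt_one_add_sup_natAbs {ι : Type*} [Fintype ι] (b : ι → ℤ) (i : ι) :
    |b i| < 1 + ↑(Finset.univ.sup fun i => (b i).natAbs) := by
  have : (b i).natAbs ≤ Finset.univ.sup fun i => (b i).natAbs :=
    Finset.le_sup (f := fun i => (b i).natAbs) (Finset.mem_univ i)
  rw [Int.abs_eq_natAbs]
  omega

theorem preimages_bounded_valid_general (N : ℕ) (a b : Fin N → ℤ)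
    (ha : ∀ i, 1 < |a i|) (y : ℕ) (Q R : ℤ)
    (hQ : Q = 1 + ↑(Finset.univ.sup fun i => (b i).natAbs))
    (hR : R = max Q (y : ℤ))
    (z : ℕ) (L : List (Fin N))
    (hvalid : ∀ t, t <+: L → 0 ≤ t.foldl (fun w i => a i * w + b i) (z : ℤ))
    (h : L.foldl (fun w i => a i * w + b i) (z : ℤ) = (y : ℤ)) :
    0 ≤ (z : ℤ) ∧ (z : ℤ) ≤ R := by
  refine ⟨Int.natCast_nonneg z, ?_⟩
  by_contra! hz
  have hb : ∀ i, |b i| < (z : ℤ) := fun i =>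
    calc |b i| < Q := hQ ▸ abs_lt_one_add_sup_natAbs b i
      _ ≤ R := hR ▸ le_max_left _ _
      _ < z := hz
  have hzy : (z : ℤ) ≤ y := h ▸ le_foldl_of_forall_prefix_nonneg a b ha L hb hvalid
  have hyR : (y : ℤ) ≤ R := hR ▸ le_max_right _ _
  omega

/-- All preimages of `y ∈ ℕ` under *valid* `F`-compositions lie in `[0, R]`, when every
function `fᵢ(z) = aᵢ·z + bᵢ` in the finite nonempty set `F` satisfies `|aᵢ| > 1`.
An `F`-composition is encoded as a list of indices `L = [e₁, …, e_K]`, applied by `foldl`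
(so `f_{e₁}` first); it is valid with respect to `z` if every value in its orbit at `z`
(i.e. the value after each prefix) is nonnegative. -/
theorem preimages_bounded_valid (N : ℕ) (hN : 0 < N) (a b : Fin N → ℤ)
    (ha : ∀ i, 1 < |a i|) (y : ℕ) (Q R : ℤ)
    (hQ : Q = 1 + ↑(Finset.univ.sup fun i => (b i).natAbs))
    (hR : R = max Q (y : ℤ))
    (z : ℕ) (L : List (Fin N))
    (hvalid : ∀ t, t <+: L → 0 ≤ t.foldl (fun w i => a i * w + b i) (z : ℤ))
    (h : L.foldl (fun w i => a i * w + b i) (z : ℤ) = (y : ℤ)) :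
    0 ≤ (z : ℤ) ∧ (z : ℤ) ≤ R :=
  preimages_bounded_valid_general N a b ha y Q R hQ hR z L hvalid h
end

section
/- Let F = {f₁, …, f_N} be a finite nonempty set of functions f_i(z) = a_i·z + b_i with a_i, b_i ∈ ℤ such that for each i either |a_i| > 1, or a_i = 1 and b_i > 0. Let y ∈ ℕ, Q = 1 + max_i |b_i|, and R = max(Q, y). Then for every z ∈ ℕ and every F-composition G that is valid with respect to z, if G(z) = y then 0 ≤ z ≤ R. -/
private lemma aux_step (N : ℕ) (a b : Fin N → ℤ)
    (ha : ∀ i, 1 < |a i| ∨ (a i = 1 ∧ 0 < b i)) (Q R : ℤ)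
    (hQ : Q = 1 + ↑(Finset.univ.sup fun i => (b i).natAbs))
    (hRQ : Q ≤ R) :
    ∀ L : List (Fin N), ∀ w : ℤ, R < w →
      (∀ t, t <+: L → 0 ≤ t.foldl (fun w i => a i * w + b i) w) →
      R < L.foldl (fun w i => a i * w + b i) w := by
  intro L
  induction L with
  | nil => intro w hw _; simpa using hw
  | cons i L' ih =>
    intro w hw hval
    have hbQ : |b i| ≤ Q - 1 := by
      have := Finset.le_sup (f := fun i => (b i).natAbs) (Finset.mem_univ i)
      have : ((b i).natAbs : ℤ) ≤ ((Finset.univ.sup fun i => (b i).natAbs : ℕ) : ℤ) := by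
        exact_mod_cast this
      rw [hQ]; rw [Int.abs_eq_natAbs]; omega
    have hw' : 0 ≤ a i * w + b i := by
      have := hval [i] ⟨L', rfl⟩
      simpa using this
    have hstep : R < a i * w + b i := by
      rcases ha i with hai | ⟨ha1, hb⟩
      · have hQ1 : 1 ≤ Q := by
          have : (0:ℤ) ≤ ((Finset.univ.sup fun i => (b i).natAbs : ℕ) : ℤ) := Int.ofNat_nonneg _
          omega
        have hwpos : 0 < w := by omega
        have h2 : 2 * w ≤ |a i * w| := by
          rw [abs_mul]
          have : 2 ≤ |a i| := by omega
          nlinarith [abs_of_pos hwpos]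
        have htri : |a i * w| - |b i| ≤ a i * w + b i := by
          have h4 : |a i * w| ≤ |a i * w + b i| + |b i| := by
            have := abs_add_le (a i * w + b i) (-(b i)); simpa using this
          have h3 : |a i * w + b i| = a i * w + b i := abs_of_nonneg hw'
          omega
        omega
      · rw [ha1]; omega
    have : R < List.foldl (fun w i => a i * w + b i) (a i * w + b i) L' := by
      apply ih _ hstep
      intro t ht
      have := hval (i :: t) (by obtain ⟨r, rfl⟩ := ht; exact ⟨r, by simp⟩)
      simpa using this
    simpa using this

/-- All preimages of `y ∈ ℕ` under *valid* `F`-compositions lie in `[0, R]`, when every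
function `fᵢ(z) = aᵢ·z + bᵢ` in the finite nonempty set `F` satisfies either `|aᵢ| > 1`,
or `aᵢ = 1` and `bᵢ > 0`. An `F`-composition is encoded as a list of indices
`L = [e₁, …, e_K]`, applied by `foldl` (so `f_{e₁}` first); it is valid with respect to `z`
if every value in its orbit at `z` (i.e. the value after each prefix) is nonnegative. -/
theorem preimages_bounded_valid_with_shifts (N : ℕ) (hN : 0 < N) (a b : Fin N → ℤ)
    (ha : ∀ i, 1 < |a i| ∨ (a i = 1 ∧ 0 < b i)) (y : ℕ) (Q R : ℤ)
    (hQ : Q = 1 + ↑(Finset.univ.sup fun i => (b i).natAbs))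
    (hR : R = max Q (y : ℤ))
    (z : ℕ) (L : List (Fin N))
    (hvalid : ∀ t, t <+: L → 0 ≤ t.foldl (fun w i => a i * w + b i) (z : ℤ))
    (h : L.foldl (fun w i => a i * w + b i) (z : ℤ) = (y : ℤ)) :
    0 ≤ (z : ℤ) ∧ (z : ℤ) ≤ R := by
  refine ⟨Int.ofNat_nonneg z, ?_⟩
  by_contra hc
  push_neg at hc
  have hRQ : Q ≤ R := by rw [hR]; exact le_max_left _ _
  have := aux_step N a b ha Q R hQ hRQ L (z : ℤ) hc hvalid
  rw [h] at this
  have : (y : ℤ) ≤ R := by rw [hR]; exact le_max_right _ _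
  omega
end

section
/- Let x, y ∈ ℕ, let S be a finite set of functions f_i(z) = a_i·z + b_i with a_i, b_i ∈ ℤ and a_i > 0, let k ∈ ℤ with k > 0, let g(z) = z − k, and let F = S ∪ {g}. Then x →_F,+ y if and only if there exists z ∈ ℤ with z ≥ y, z ≡ y (mod k), and x →_S,+ z. -/
/-- `x →_F,+ y`: there is an `F`-composition, valid with respect to `x` (every integer in
its orbit at `x` is nonnegative), mapping `x` to `y`. -/
def ReachesPos (F : Finset (ℤ × ℤ)) (x y : ℤ) : Prop :=
  ∃ L : List (ℤ × ℤ), (∀ p ∈ L, p ∈ F) ∧ (∀ t, t <+: L → 0 ≤ applyComp t x) ∧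
    applyComp L x = y

/-!
Dropping every `g` from a valid `F`-composition gives a valid `S`-composition whose value
after each step dominates the original value and agrees with it modulo `k`: maps
`z ↦ a z + b` with `a > 0` are monotone and preserve congruences, while `g` lowers the value
by a multiple of `k`.
Conversely, appending `(z - y) / k` copies of `g` to an `S`-composition reaching `z` stays
nonnegative all the way down to `y`.
-/

lemma applyComp_concat (L : List (ℤ × ℤ)) (p : ℤ × ℤ) (x : ℤ) :
    applyComp (L ++ [p]) x = p.1 * applyComp L x + p.2 :=
  List.foldl_concat _ _ _ _

namespace ReachesPos

variable {F : Finset (ℤ × ℤ)} {x : ℤ}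

lemma refl (hx : 0 ≤ x) : ReachesPos F x x :=
  ⟨[], by simp, fun t ht => by rwa [List.prefix_nil.mp ht], rfl⟩

lemma mono {F' : Finset (ℤ × ℤ)} (hF : F ⊆ F') {y : ℤ} (h : ReachesPos F x y) :
    ReachesPos F' x y := by
  obtain ⟨L, hLF, hvalid, rfl⟩ := h
  exact ⟨L, fun p hp => hF (hLF p hp), hvalid, rfl⟩

lemma snoc {w : ℤ} (h : ReachesPos F x w) {p : ℤ × ℤ} (hp : p ∈ F)
    (hpos : 0 ≤ p.1 * w + p.2) :
    ReachesPos F x (p.1 * w + p.2) := by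
  obtain ⟨L, hLF, hvalid, rfl⟩ := h
  refine ⟨L ++ [p], ?_, ?_, applyComp_concat L p x⟩
  · intro q hq
    rcases List.mem_append.mp hq with hq | hq
    · exact hLF q hq
    · rwa [List.mem_singleton.mp hq]
  · intro t ht
    rcases List.prefix_concat_iff.mp ht with rfl | ht
    · rwa [applyComp_concat]
    · exact hvalid t ht

lemma induction {P : ℤ → Prop} (base : P x)
    (step : ∀ w, ∀ p ∈ F, P w → 0 ≤ p.1 * w + p.2 → P (p.1 * w + p.2))
    {y : ℤ} (h : ReachesPos F x y) : P y := by
  obtain ⟨L, hLF, hvalid, rfl⟩ := h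
  induction L using List.reverseRecOn with
  | nil => exact base
  | append_singleton L p ih =>
    rw [applyComp_concat]
    refine step _ p (hLF p (by simp)) (ih (fun q hq => hLF q (by simp [hq])) ?_) ?_
    · exact fun t ht => hvalid t (ht.trans (L.prefix_append _))
    · simpa [applyComp_concat] using hvalid (L ++ [p]) List.prefix_rfl

lemma sub_mul_of_shift_mem {k z : ℤ} (h : ReachesPos F x z) (hg : ((1 : ℤ), -k) ∈ F)
    (hk : 0 ≤ k) (j : ℕ) (hj : 0 ≤ z - j * k) : ReachesPos F x (z - j * k) := by
  induction j with
  | zero => simpa using h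
  | succ j ih =>
    have hstep := (ih (by push_cast at hj; linarith)).snoc hg (by push_cast at hj; linarith)
    convert hstep using 1
    push_cast
    ring

end ReachesPos

lemma exists_congr_ge_of_reachesPos_insert_shift {S : Finset (ℤ × ℤ)}
    (hS : ∀ p ∈ S, 0 < p.1) {k x y : ℤ} (hk : 0 ≤ k) (hx : 0 ≤ x)
    (h : ReachesPos (insert ((1 : ℤ), -k) S) x y) :
    ∃ z, y ≤ z ∧ z ≡ y [ZMOD k] ∧ ReachesPos S x z := by
  refine h.induction (P := fun w => ∃ z, w ≤ z ∧ z ≡ w [ZMOD k] ∧ ReachesPos S x z)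
    ⟨x, le_rfl, Int.ModEq.refl x, .refl hx⟩ ?_
  rintro w p hp ⟨z, hwz, hzw, hz⟩ hpos
  rcases Finset.mem_insert.mp hp with rfl | hpS
  · exact ⟨z, by linarith, hzw.trans (Int.modEq_iff_dvd.mpr ⟨-1, by ring⟩), hz⟩
  · have hmono : p.1 * w + p.2 ≤ p.1 * z + p.2 := by
      have := mul_le_mul_of_nonneg_left hwz (hS p hpS).le
      linarith
    exact ⟨p.1 * z + p.2, hmono, (hzw.mul_left p.1).add_right p.2,
      hz.snoc hpS (hpos.trans hmono)⟩

/-- For `x, y ∈ ℕ`, a finite set `S` of functions `fᵢ(z) = aᵢ·z + bᵢ` with `aᵢ > 0`,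
`k > 0`, `g(z) = z − k` (encoded as the pair `(1, -k)`), and `F = S ∪ {g}`:
`x →_F,+ y` iff `x →_S,+ z` for some `z ≥ y` with `z ≡ y (mod k)`. -/
theorem reachesPos_union_shift_iff (x y : ℕ) (S : Finset (ℤ × ℤ))
    (hS : ∀ p ∈ S, 0 < p.1) (k : ℤ) (hk : 0 < k) :
    ReachesPos (insert ((1 : ℤ), -k) S) (x : ℤ) (y : ℤ) ↔
      ∃ z : ℤ, (y : ℤ) ≤ z ∧ z ≡ (y : ℤ) [ZMOD k] ∧ ReachesPos S (x : ℤ) z := by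
  refine ⟨exists_congr_ge_of_reachesPos_insert_shift hS hk.le (Int.natCast_nonneg x), ?_⟩
  rintro ⟨z, hyz, hzy, hz⟩
  obtain ⟨m, hm⟩ := Int.modEq_iff_dvd.mp hzy.symm
  obtain ⟨j, rfl⟩ := Int.eq_ofNat_of_zero_le (show 0 ≤ m by nlinarith)
  have hy : (y : ℤ) = z - j * k := by linarith
  rw [hy]
  exact (hz.mono (Finset.subset_insert _ _)).sub_mul_of_shift_mem (Finset.mem_insert_self _ _)
    hk.le j (hy ▸ Int.natCast_nonneg y)
end
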